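/- Let u ∈ L²(ℝ) and s > 0, and suppose the system of translates {T_{sk} u : k ∈ ℤ} is an ω-independent Bessel sequence in L²(ℝ). Let c ∈ ℓ²_O(ℤ). Then the unconditionally convergent series f = Σ_{k∈ℤ} c_k T_{sk} u and f_× = Σ_{k∈ℤ} conj(c_k) T_{sk} u do not agree up to a global phase: there is no ν ∈ ℂ with |ν| = 1 and f = ν·f_×. -/

import Mathlib

/-!
A Bessel sequence `(xₖ)` has a bounded analysis operator `T f = (⟪xₖ, f⟫)ₖ` (closed graph
theorem), so `∑ cₖ xₖ = T† c` converges for every `c ∈ ℓ²`. If `f = ν f_×` with `|ν| = 1`, then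
`ω`-independence compares coefficients: `cₖ = ν c̄ₖ` for all `k`. Writing `ν = w²` with `|w| = 1`,
every `w⁻¹ cₖ` is then self-conjugate, i.e. real, so `c` lies on the line `w ℝ`.
-/

open MeasureTheory Complex Real
open scoped ComplexConjugate InnerProductSpace

/-- The short-time Fourier transform of `f ∈ L²(ℝ)` with respect to the window `g ∈ L²(ℝ)`:
`V_g f (x, ω) = ∫ f(t) conj(g(t-x)) e^{-2πiωt} dt`. -/
noncomputable def STFT (g f : Lp ℂ 2 (volume : Measure ℝ)) (x ω : ℝ) : ℂ :=
  ∫ t : ℝ, f t * (starRingEnd ℂ) (g (t - x)) * Complex.exp (-2 * Real.pi * Complex.I * ω * t)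

/-- `f` and `h` agree up to a global phase: `f = ν • h` for some unimodular `ν ∈ ℂ`. -/
def SamePhase (f h : Lp ℂ 2 (volume : Measure ℝ)) : Prop :=
  ∃ ν : ℂ, ‖ν‖ = 1 ∧ f = ν • h

/-- Translation operator `T_τ` on `L²(ℝ)`: `(T_τ f)(t) = f (t - τ)`. -/
noncomputable def Translate (τ : ℝ) (f : Lp ℂ 2 (volume : Measure ℝ)) :
    Lp ℂ 2 (volume : Measure ℝ) :=
  Lp.compMeasurePreserving (fun t => t - τ) (measurePreserving_sub_right volume τ) f

/-- A family `x : ℤ → L²(ℝ)` is a Bessel sequence if `∑ₖ |⟨f, xₖ⟩|² < ∞` for every `f ∈ L²(ℝ)`. -/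
def IsBessel (x : ℤ → Lp ℂ 2 (volume : Measure ℝ)) : Prop :=
  ∀ f : Lp ℂ 2 (volume : Measure ℝ), Summable fun k : ℤ => ‖(inner ℂ f (x k) : ℂ)‖ ^ 2

/-- The values of the sequence `c : ℤ → ℂ` do not all lie on a single line through the
origin of the complex plane (the defining property of `ℓ²_𝒪(ℤ)`). -/
def NotOnLine (c : ℤ → ℂ) : Prop :=
  ¬ ∃ α : ℝ, ∀ k : ℤ, ∃ r : ℝ, c k = Complex.exp (α * Complex.I) * r

theorem memℓp_two_of_summable_sq {ι : Type*} {c : ι → ℂ}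
    (hc : Summable fun k => ‖c k‖ ^ 2) : Memℓp c 2 :=
  memℓp_gen (by simpa using hc)

namespace BesselSequence

variable {ι H : Type*} [NormedAddCommGroup H] [InnerProductSpace ℂ H] [CompleteSpace H]
  {x : ι → H}

noncomputable def analysisOperator (hB : ∀ f : H, Summable fun k => ‖⟪f, x k⟫_ℂ‖ ^ 2) :
    H →L[ℂ] lp (fun _ : ι => ℂ) 2 :=
  ContinuousLinearMap.ofSeqClosedGraph
    (g := { toFun f := ⟨fun k => ⟪x k, f⟫_ℂ,
              memℓp_two_of_summable_sq (by simpa only [norm_inner_symm] using hB f)⟩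
            map_add' f g := lp.ext <| funext fun k => inner_add_right _ _ _
            map_smul' a f := lp.ext <| funext fun k => inner_smul_right _ _ _ })
    fun u f y hu hy => lp.ext <| funext fun k =>
      tendsto_nhds_unique
        (((lp.evalCLM ℂ (fun _ : ι => ℂ) 2 k).continuous.tendsto y).comp hy)
        (tendsto_const_nhds.inner hu)

theorem analysisOperator_apply (hB : ∀ f : H, Summable fun k => ‖⟪f, x k⟫_ℂ‖ ^ 2) (f : H)
    (k : ι) : analysisOperator hB f k = ⟪x k, f⟫_ℂ :=
  rfl

theorem adjoint_analysisOperator_single [DecidableEq ι]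
    (hB : ∀ f : H, Summable fun k => ‖⟪f, x k⟫_ℂ‖ ^ 2) (k : ι) (a : ℂ) :
    ContinuousLinearMap.adjoint (analysisOperator hB) (lp.single 2 k a) = a • x k :=
  ext_inner_right ℂ fun v => by
    rw [ContinuousLinearMap.adjoint_inner_left, lp.inner_single_left, analysisOperator_apply,
      inner_smul_left, RCLike.inner_apply', mul_comm]

theorem summable_smul (hB : ∀ f : H, Summable fun k => ‖⟪f, x k⟫_ℂ‖ ^ 2) {c : ι → ℂ}
    (hc : Summable fun k => ‖c k‖ ^ 2) : Summable fun k => c k • x k := by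
  classical
  let c' : lp (fun _ : ι => ℂ) 2 := ⟨c, memℓp_two_of_summable_sq hc⟩
  have hsum := (lp.hasSum_single ENNReal.ofNat_ne_top c').mapL
    (ContinuousLinearMap.adjoint (analysisOperator hB))
  simp only [adjoint_analysisOperator_single] at hsum
  exact hsum.summable

end BesselSequence

def OmegaIndependent (R : Type*) {ι E : Type*} [Semiring R] [AddCommMonoid E] [Module R E]
    [TopologicalSpace E] (x : ι → E) : Prop :=
  ∀ a : ι → R, HasSum (fun k => a k • x k) 0 → ∀ k, a k = 0

theorem OmegaIndependent.eq_of_hasSum {R ι E : Type*} [Ring R] [AddCommGroup E] [Module R E]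
    [TopologicalSpace E] [IsTopologicalAddGroup E] {x : ι → E} (hx : OmegaIndependent R x)
    {a b : ι → R} {f : E} (ha : HasSum (fun k => a k • x k) f)
    (hb : HasSum (fun k => b k • x k) f) : a = b :=
  funext fun k => sub_eq_zero.1 <|
    hx (a - b) (by simpa only [Pi.sub_apply, sub_smul, sub_self] using ha.sub hb) k

theorem exists_eq_exp_mul_ofReal_of_eq_mul_conj {ν z : ℂ} (hν : ‖ν‖ = 1)
    (h : z = ν * conj z) : ∃ r : ℝ, z = exp (↑(ν.arg / 2) * I) * r := by
  set w := exp (↑(ν.arg / 2) * I)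
  have hw : w ≠ 0 := exp_ne_zero _
  have hν_eq : ν = w * w := calc
    ν = exp (ν.arg * I) := by
      simpa only [hν, ofReal_one, one_mul] using (norm_mul_exp_arg_mul_I ν).symm
    _ = w * w := by rw [← Complex.exp_add]; push_cast; ring_nf
  have hw_conj : conj w = w⁻¹ := by
    rw [← exp_conj, ← Complex.exp_neg, map_mul, conj_ofReal, conj_I]
    ring_nf
  obtain ⟨r, hr⟩ := conj_eq_iff_real.1 (show conj (w⁻¹ * z) = w⁻¹ * z by
    rw [map_mul, map_inv₀, hw_conj, inv_inv]
    conv_rhs => rw [h, hν_eq]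
    field_simp)
  exact ⟨r, by rw [← hr]; field_simp⟩

theorem NotOnLine.ne_mul_conj {c : ℤ → ℂ} (hc : NotOnLine c) {ν : ℂ} (hν : ‖ν‖ = 1) :
    c ≠ fun k => ν * conj (c k) := fun h =>
  hc ⟨ν.arg / 2, fun k => exists_eq_exp_mul_ofReal_of_eq_mul_conj hν (congrFun h k)⟩

theorem stmt10_general (u : Lp ℂ 2 (volume : Measure ℝ)) (s : ℝ)
    (hBessel : IsBessel fun k : ℤ => Translate (s * k) u)
    (hIndep : ∀ a : ℤ → ℂ, HasSum (fun k : ℤ => a k • Translate (s * k) u) 0 → ∀ k, a k = 0)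
    (c : ℤ → ℂ) (hc2 : Summable fun k : ℤ => ‖c k‖ ^ 2) (hc : NotOnLine c) :
    ∃ f fₓ : Lp ℂ 2 (volume : Measure ℝ),
      HasSum (fun k : ℤ => c k • Translate (s * k) u) f ∧
      HasSum (fun k : ℤ => (starRingEnd ℂ) (c k) • Translate (s * k) u) fₓ ∧
      ¬ SamePhase f fₓ := by
  obtain ⟨f, hf⟩ := BesselSequence.summable_smul hBessel hc2
  obtain ⟨fₓ, hfₓ⟩ := BesselSequence.summable_smul hBessel (c := fun k => conj (c k))
    (by simpa only [RCLike.norm_conj] using hc2)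
  refine ⟨f, fₓ, hf, hfₓ, ?_⟩
  rintro ⟨ν, hν, rfl⟩
  have hνfₓ : HasSum (fun k => (ν * conj (c k)) • Translate (s * k) u) (ν • fₓ) := by
    simpa only [smul_smul] using hfₓ.const_smul ν
  exact hc.ne_mul_conj hν (OmegaIndependent.eq_of_hasSum hIndep hf hνfₓ)

/-- If `{T_{sk} u : k ∈ ℤ}` is an ω-independent Bessel sequence and `c ∈ ℓ²_𝒪(ℤ)`, then the
unconditionally convergent series `f = ∑ₖ cₖ T_{sk} u` and `f_× = ∑ₖ conj(cₖ) T_{sk} u` do not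
agree up to a global phase. -/
theorem stmt10 (u : Lp ℂ 2 (volume : Measure ℝ)) (s : ℝ) (hs : 0 < s)
    (hBessel : IsBessel fun k : ℤ => Translate (s * k) u)
    (hIndep : ∀ a : ℤ → ℂ, HasSum (fun k : ℤ => a k • Translate (s * k) u) 0 → ∀ k, a k = 0)
    (c : ℤ → ℂ) (hc2 : Summable fun k : ℤ => ‖c k‖ ^ 2) (hc : NotOnLine c) :
    ∃ f fₓ : Lp ℂ 2 (volume : Measure ℝ),
      HasSum (fun k : ℤ => c k • Translate (s * k) u) f ∧
      HasSum (fun k : ℤ => (starRingEnd ℂ) (c k) • Translate (s * k) u) fₓ ∧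
      ¬ SamePhase f fₓ :=
  stmt10_general u s hBessel hIndep c hc2 hc
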